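/- Let N ≥ 1, let p : ℝ^N → ℝ be a probability density (p ≥ 0, integrable, ∫ p = 1), and let σ > 0. For every ε > 0 there exist an integer K ≥ 1, weights π_1, …, π_K ≥ 0 with Σ_{k=1}^K π_k = 1, and points μ_1, …, μ_K ∈ ℝ^N such that ∫_{ℝ^N} |(p ∗ φ_σ)(x) − Σ_{k=1}^K π_k φ_σ(x − μ_k)| dx < ε. That is, the Gaussian-smoothed density p ∗ φ_σ, which is an infinite Gaussian mixture with mixing density p, can be approximated arbitrarily well in L¹ by a finite mixture of translates of the same Gaussian kernel. -/

import Mathlib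

open MeasureTheory Real

/-- The isotropic Gaussian kernel `φ_σ` on `ℝ^N`. -/
noncomputable def gaussKernel (N : ℕ) (σ : ℝ) (x : EuclideanSpace ℝ (Fin N)) : ℝ :=
  (2 * π * σ ^ 2) ^ (-(N : ℝ) / 2) * Real.exp (-‖x‖ ^ 2 / (2 * σ ^ 2))


open Filter

namespace GKaux
variable {N : ℕ} {σ : ℝ}

local notation "E" => EuclideanSpace ℝ (Fin N)

lemma gauss_eq (x : E) :
    gaussKernel N σ x = (2 * π * σ ^ 2) ^ (-(N : ℝ) / 2)
       * rexp (-(1/(2*σ^2)) * ‖x‖^2) := by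
  unfold gaussKernel
  ring_nf

lemma gC_pos (hσ : 0 < σ) : 0 < (2 * π * σ ^ 2) ^ (-(N : ℝ) / 2) :=
  Real.rpow_pos_of_pos (by have := Real.pi_pos; positivity) _

lemma gauss_pos (hσ : 0 < σ) (x : E) : 0 < gaussKernel N σ x := by
  rw [gauss_eq]
  have := gC_pos (N := N) hσ
  positivity

lemma gauss_le (hσ : 0 < σ) (x : E) :
    gaussKernel N σ x ≤ (2 * π * σ ^ 2) ^ (-(N : ℝ) / 2) := by
  rw [gauss_eq]
  apply mul_le_of_le_one_right (gC_pos hσ).le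
  rw [Real.exp_le_one_iff]
  have : (0:ℝ) ≤ (1/(2*σ^2)) * ‖x‖^2 := by positivity
  linarith

lemma gauss_cont : Continuous (gaussKernel N σ) := by
  unfold gaussKernel
  fun_prop

lemma int_exp (b : ℝ) (hb : 0 < b) : Integrable (fun v : E => rexp (-b * ‖v‖^2)) := by
  have := (GaussianFourier.integrable_cexp_neg_mul_sq_norm_add (V := E) (b := (b:ℂ))
    (by simpa using hb) 0 0).norm
  simp only [Complex.norm_exp] at this
  convert this using 2 with v
  simp [Complex.add_re, Complex.mul_re]
  exact Or.inl (by norm_cast)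

lemma gauss_integrable (hσ : 0 < σ) : Integrable (gaussKernel N σ) := by
  have h := (int_exp (N := N) (1/(2*σ^2)) (by positivity)).const_mul
    ((2 * π * σ ^ 2) ^ (-(N : ℝ) / 2))
  exact h.congr (Eventually.of_forall fun x => (gauss_eq x).symm)

end GKaux

namespace GKaux
variable {N : ℕ} {σ : ℝ}
local notation "E" => EuclideanSpace ℝ (Fin N)

noncomputable def T (N : ℕ) (σ : ℝ) (t : EuclideanSpace ℝ (Fin N)) : ℝ :=
  ∫ x : EuclideanSpace ℝ (Fin N), |gaussKernel N σ (x - t) - gaussKernel N σ x|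

lemma T_int_inner (hσ : 0 < σ) (t : E) :
    Integrable (fun x : E => |gaussKernel N σ (x - t) - gaussKernel N σ x|) :=
  (((gauss_integrable hσ).comp_sub_right t).sub (gauss_integrable hσ)).abs

lemma T_nonneg (t : E) : 0 ≤ T N σ t :=
  integral_nonneg fun x => abs_nonneg _

lemma T_le (hσ : 0 < σ) (t : E) :
    T N σ t ≤ 2 * ∫ x : E, gaussKernel N σ x := by
  have h1 : T N σ t ≤ ∫ x : E, (gaussKernel N σ (x - t) + gaussKernel N σ x) := by
    apply integral_mono (T_int_inner hσ t)
      (((gauss_integrable hσ).comp_sub_right t).add (gauss_integrable hσ))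
    intro x
    calc |gaussKernel N σ (x - t) - gaussKernel N σ x|
        ≤ |gaussKernel N σ (x - t)| + |gaussKernel N σ x| := abs_sub _ _
      _ = gaussKernel N σ (x - t) + gaussKernel N σ x := by
          rw [abs_of_nonneg (gauss_pos hσ _).le, abs_of_nonneg (gauss_pos hσ _).le]
  have h2 : ∫ x : E, (gaussKernel N σ (x - t) + gaussKernel N σ x)
      = 2 * ∫ x : E, gaussKernel N σ x := by
    rw [integral_add ((gauss_integrable hσ).comp_sub_right t) (gauss_integrable hσ),
      integral_sub_right_eq_self]
    ring
  linarith

lemma shift_eq (hσ : 0 < σ) (y m : E) :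
    ∫ x : E, |gaussKernel N σ (x - y) - gaussKernel N σ (x - m)| = T N σ (y - m) := by
  have h := integral_add_right_eq_self (μ := (volume : Measure E))
    (fun x : E => |gaussKernel N σ (x - y) - gaussKernel N σ (x - m)|) m
  rw [← h]
  unfold T
  congr 1
  ext x
  have h1 : x + m - y = x - (y - m) := by abel
  have h2 : x + m - m = x := by abel
  rw [h1, h2]

lemma T_tendsto (hσ : 0 < σ) : Tendsto (T N σ) (nhds 0) (nhds 0) := by
  set C := (2 * π * σ ^ 2) ^ (-(N : ℝ) / 2) with hC
  set b := 1 / (2 * σ ^ 2) with hb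
  have hbpos : 0 < b := by positivity
  have hCpos : 0 < C := gC_pos hσ
  set bound := fun x : E => C * rexp b * rexp (-(b/2) * ‖x‖^2) + gaussKernel N σ x with hbd
  have hboundint : Integrable bound :=
    ((int_exp (N := N) (b/2) (by positivity)).const_mul (C * rexp b)).add (gauss_integrable hσ)
  have key := tendsto_integral_filter_of_dominated_convergence (μ := (volume : Measure E))
    (l := nhds (0 : E)) (F := fun t x => |gaussKernel N σ (x - t) - gaussKernel N σ x|)
    (f := fun _ => (0:ℝ)) bound
    (Eventually.of_forall fun t => (T_int_inner hσ t).aestronglyMeasurable)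
    ?_ hboundint ?_
  · simp at key; exact key
  · have hball : ∀ᶠ t : E in nhds 0, ‖t‖ ≤ 1 := by
      filter_upwards [Metric.closedBall_mem_nhds (0 : E) one_pos] with t ht
      simpa using ht
    filter_upwards [hball] with t ht
    apply Eventually.of_forall
    intro x
    rw [Real.norm_eq_abs, abs_abs]
    have hphi : gaussKernel N σ (x - t) ≤ C * rexp b * rexp (-(b/2) * ‖x‖^2) := by
      rw [gauss_eq, ← hC, ← hb, mul_assoc, ← Real.exp_add]
      apply mul_le_mul_of_nonneg_left _ hCpos.le
      apply Real.exp_le_exp.2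
      have h1 : ‖x‖ ≤ ‖x - t‖ + 1 := by
        calc ‖x‖ = ‖(x - t) + t‖ := by rw [sub_add_cancel]
          _ ≤ ‖x - t‖ + ‖t‖ := norm_add_le _ _
          _ ≤ ‖x - t‖ + 1 := by linarith
      have h2 : ‖x‖^2 ≤ 2 * ‖x - t‖^2 + 2 := by nlinarith [norm_nonneg (x - t), norm_nonneg x, sq_nonneg (‖x - t‖ - 1)]
      nlinarith [sq_nonneg (‖x - t‖)]
    calc |gaussKernel N σ (x - t) - gaussKernel N σ x|
        ≤ |gaussKernel N σ (x - t)| + |gaussKernel N σ x| := abs_sub _ _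
      _ = gaussKernel N σ (x - t) + gaussKernel N σ x := by
          rw [abs_of_nonneg (gauss_pos hσ _).le, abs_of_nonneg (gauss_pos hσ _).le]
      _ ≤ bound x := by exact add_le_add_left hphi _
  · apply Eventually.of_forall
    intro x
    have hcont : Continuous fun t : E => |gaussKernel N σ (x - t) - gaussKernel N σ x| :=
      (((gauss_cont (N := N) (σ := σ)).comp (continuous_const.sub continuous_id)).sub
        continuous_const).abs
    have := hcont.tendsto 0
    simpa using this

end GKaux


lemma exists_partition {N : ℕ} {δ : ℝ} (hδ : 0 < δ) (R : ℝ) :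
    ∃ (n : ℕ) (μf : Fin (n+1) → EuclideanSpace ℝ (Fin N))
      (P : Fin (n+1) → Set (EuclideanSpace ℝ (Fin N))),
      (∀ k, MeasurableSet (P k)) ∧ Pairwise (Function.onFun Disjoint P) ∧ (⋃ k, P k) = Set.univ ∧
      (∀ k : Fin (n+1), (k:ℕ) < n → ∀ y ∈ P k, ‖y - μf k‖ < δ) ∧
      (P (Fin.last n) ⊆ (Metric.closedBall (0:EuclideanSpace ℝ (Fin N)) R)ᶜ) := by
  set E := EuclideanSpace ℝ (Fin N)
  obtain ⟨s, hs⟩ := (isCompact_closedBall (0:E) R).elim_finite_subcover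
    (fun y : E => Metric.ball y δ) (fun _ => Metric.isOpen_ball)
    (fun y _ => Set.mem_iUnion.2 ⟨y, Metric.mem_ball_self hδ⟩)
  set L := s.toList with hL
  set n := L.length with hn
  set Q : ℕ → Set E := fun j => if h : j < n then Metric.ball (L.get ⟨j,h⟩) δ else ∅ with hQ
  have hQmeas : ∀ j, MeasurableSet (Q j) := by
    intro j
    by_cases h : j < n
    · simp only [hQ, dif_pos h]; exact measurableSet_ball
    · simp only [hQ, dif_neg h]; exact MeasurableSet.empty
  have hcb : Metric.closedBall (0:E) R ⊆ ⋃ j : ℕ, Q j := by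
    intro y hy
    obtain ⟨z, hz, hyz⟩ := Set.mem_iUnion₂.1 (hs hy)
    have hzL : z ∈ L := Finset.mem_toList.mpr hz
    obtain ⟨i, hi⟩ := List.mem_iff_get.1 hzL
    exact Set.mem_iUnion.2 ⟨i, by simp only [hQ]; rw [dif_pos (show (i:ℕ) < n from i.isLt)]; rwa [Fin.eta, hi]⟩
  set D := disjointed Q with hD
  refine ⟨n, fun k => if h : (k:ℕ) < n then L.get ⟨k,h⟩ else 0,
    fun k => if h : (k:ℕ) < n then D k else (⋃ j, Q j)ᶜ, ?_, ?_, ?_, ?_, ?_⟩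
  · intro k
    by_cases h : (k:ℕ) < n
    · simp only [dif_pos h]; exact MeasurableSet.disjointed hQmeas _
    · simp only [dif_neg h]; exact (MeasurableSet.iUnion hQmeas).compl
  · intro j k hjk
    by_cases hj : (j:ℕ) < n <;> by_cases hk : (k:ℕ) < n
    · simp only [Function.onFun, dif_pos hj, dif_pos hk]
      exact disjoint_disjointed Q (fun h => hjk (Fin.ext h))
    · simp only [Function.onFun, dif_pos hj, dif_neg hk]
      exact Disjoint.mono_left ((disjointed_subset Q j).trans (Set.subset_iUnion Q j))
        disjoint_compl_right
    · simp only [Function.onFun, dif_neg hj, dif_pos hk]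
      exact (Disjoint.mono_left ((disjointed_subset Q k).trans (Set.subset_iUnion Q k))
        disjoint_compl_right).symm
    · exact absurd (Fin.ext (by omega : (j:ℕ) = k)) hjk
  · ext y
    simp only [Set.mem_univ, iff_true, Set.mem_iUnion]
    by_cases hy : y ∈ ⋃ j : ℕ, Q j
    · rw [← iUnion_disjointed] at hy
      obtain ⟨j, hj⟩ := Set.mem_iUnion.1 hy
      have hjn : j < n := by
        by_contra h
        have : D j ⊆ Q j := disjointed_subset Q j
        rw [hQ] at this
        simp only [dif_neg h] at this
        exact this hj
      refine ⟨⟨j, by omega⟩, ?_⟩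
      simp only [dif_pos hjn]
      exact hj
    · refine ⟨Fin.last n, ?_⟩
      simp only [Fin.val_last, lt_irrefl, dif_neg (lt_irrefl n)]
      exact hy
  · intro k hk y hy
    simp only [dif_pos hk] at hy ⊢
    have : y ∈ Q (k:ℕ) := disjointed_subset Q _ hy
    simp only [hQ, dif_pos hk] at this
    rw [← dist_eq_norm]
    exact Metric.mem_ball.1 this
  · simp only [Fin.val_last, dif_neg (lt_irrefl n)]
    exact Set.compl_subset_compl.2 hcb

namespace GKaux
variable {N : ℕ} {σ : ℝ}
local notation "E" => EuclideanSpace ℝ (Fin N)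

noncomputable def Psi (N : ℕ) (σ : ℝ) (p : EuclideanSpace ℝ (Fin N) → ℝ)
    (S : Set (EuclideanSpace ℝ (Fin N))) (m : EuclideanSpace ℝ (Fin N)) :
    EuclideanSpace ℝ (Fin N) × EuclideanSpace ℝ (Fin N) → ℝ :=
  fun z => Set.indicator {z' : _ × _ | z'.2 ∈ S}
    (fun z' => p z'.2 * |gaussKernel N σ (z'.1 - z'.2) - gaussKernel N σ (z'.1 - m)|) z

variable {p : EuclideanSpace ℝ (Fin N) → ℝ} {S : Set (EuclideanSpace ℝ (Fin N))}
  {m : EuclideanSpace ℝ (Fin N)}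

lemma Psi_snd (x y : E) : Psi N σ p S m (x, y)
    = Set.indicator S (fun y' => p y' * |gaussKernel N σ (x - y') - gaussKernel N σ (x - m)|) y := by
  classical
  rw [Psi, Set.indicator_apply, Set.indicator_apply]
  rfl

lemma Psi_nonneg (hpos : ∀ x, 0 ≤ p x) (z : E × E) : 0 ≤ Psi N σ p S m z :=
  Set.indicator_nonneg (fun z' _ => mul_nonneg (hpos _) (abs_nonneg _)) z

lemma Psi_aesm (hint : Integrable p) (hS : MeasurableSet S) :
    AEStronglyMeasurable (Psi N σ p S m) ((volume : Measure E).prod volume) := by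
  apply AEStronglyMeasurable.indicator _ (measurable_snd hS)
  refine AEStronglyMeasurable.mul hint.aestronglyMeasurable.comp_snd ?_
  apply Continuous.aestronglyMeasurable
  exact (((gauss_cont (N := N) (σ := σ)).comp (continuous_fst.sub continuous_snd)).sub
    ((gauss_cont (N := N) (σ := σ)).comp (continuous_fst.sub continuous_const))).abs

lemma Psi_int_x (hσ : 0 < σ) (y : E) :
    Integrable (fun x : E => Psi N σ p S m (x, y)) := by
  by_cases hy : y ∈ S
  · have : (fun x : E => Psi N σ p S m (x, y))
        = fun x => p y * |gaussKernel N σ (x - y) - gaussKernel N σ (x - m)| := by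
      funext x
      rw [Psi_snd, Set.indicator_of_mem hy]
    rw [this]
    exact ((((gauss_integrable hσ).comp_sub_right y).sub
      ((gauss_integrable hσ).comp_sub_right m)).abs).const_mul _
  · have : (fun x : E => Psi N σ p S m (x, y)) = fun _ => (0:ℝ) := by
      funext x
      rw [Psi_snd, Set.indicator_of_notMem hy]
    rw [this]
    exact integrable_zero _ _ _

lemma Psi_integral_x (hσ : 0 < σ) (y : E) :
    ∫ x : E, Psi N σ p S m (x, y) = Set.indicator S (fun y' => p y' * T N σ (y' - m)) y := by
  by_cases hy : y ∈ S
  · rw [Set.indicator_of_mem hy]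
    have : (fun x : E => Psi N σ p S m (x, y))
        = fun x => p y * |gaussKernel N σ (x - y) - gaussKernel N σ (x - m)| := by
      funext x; rw [Psi_snd, Set.indicator_of_mem hy]
    rw [this, integral_const_mul, shift_eq hσ]
  · rw [Set.indicator_of_notMem hy]
    have : (fun x : E => Psi N σ p S m (x, y)) = fun _ => (0:ℝ) := by
      funext x; rw [Psi_snd, Set.indicator_of_notMem hy]
    rw [this, integral_zero]

lemma Psi_int (hσ : 0 < σ) (hpos : ∀ x, 0 ≤ p x) (hint : Integrable p)
    (hS : MeasurableSet S) :
    Integrable (Psi N σ p S m) ((volume : Measure E).prod volume) := by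
  set c := ∫ x : E, gaussKernel N σ x with hc
  rw [integrable_prod_iff' (Psi_aesm hint hS)]
  constructor
  · exact Filter.Eventually.of_forall (Psi_int_x hσ)
  · have hnorm_eq : ∀ y : E, (fun x : E => ‖Psi N σ p S m (x, y)‖)
        = fun x => Psi N σ p S m (x, y) := by
      intro y; funext x
      rw [Real.norm_eq_abs, abs_of_nonneg (Psi_nonneg hpos _)]
    apply Integrable.mono' ((hint.const_mul (2*c)).indicator hS)
    · have h1 : AEStronglyMeasurable (fun z : E × E => ‖Psi N σ p S m z.swap‖)
          ((volume : Measure E).prod volume) := ((Psi_aesm hint hS).prod_swap).norm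
      have := h1.integral_prod_right'
      simpa using this
    · apply Filter.Eventually.of_forall
      intro y
      rw [hnorm_eq y]
      show |∫ x : E, Psi N σ p S m (x, y)| ≤ _
      rw [Psi_integral_x hσ]
      rw [abs_of_nonneg (Set.indicator_nonneg
        (fun y' _ => mul_nonneg (hpos _) (T_nonneg _)) _)]
      by_cases hy : y ∈ S
      · rw [Set.indicator_of_mem hy, Set.indicator_of_mem hy]
        calc p y * T N σ (y - m) ≤ p y * (2 * c) :=
              mul_le_mul_of_nonneg_left (T_le hσ _) (hpos y)
          _ = 2 * c * p y := by ring
      · rw [Set.indicator_of_notMem hy, Set.indicator_of_notMem hy]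

lemma Psi_double_le (hσ : 0 < σ) (hpos : ∀ x, 0 ≤ p x) (hint : Integrable p)
    (hS : MeasurableSet S) {A : ℝ} (hA : ∀ y ∈ S, T N σ (y - m) ≤ A) :
    ∫ y : E, ∫ x : E, Psi N σ p S m (x, y) ≤ A * ∫ y in S, p y := by
  have hB : Integrable (fun y : E => Set.indicator S (fun y' => A * p y') y) :=
    (hint.const_mul A).indicator hS
  have h1 : ∫ y : E, ∫ x : E, Psi N σ p S m (x, y)
      ≤ ∫ y : E, Set.indicator S (fun y' => A * p y') y := by
    apply integral_mono_of_nonneg _ hB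
    · apply Filter.Eventually.of_forall
      intro y
      show (∫ x : E, Psi N σ p S m (x, y)) ≤ Set.indicator S (fun y' => A * p y') y
      rw [Psi_integral_x hσ]
      by_cases hy : y ∈ S
      · rw [Set.indicator_of_mem hy, Set.indicator_of_mem hy]
        calc p y * T N σ (y - m) ≤ p y * A :=
              mul_le_mul_of_nonneg_left (hA y hy) (hpos y)
          _ = A * p y := by ring
      · rw [Set.indicator_of_notMem hy, Set.indicator_of_notMem hy]
    · apply Filter.Eventually.of_forall
      intro y
      show (0:ℝ) ≤ ∫ x : E, Psi N σ p S m (x, y)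
      rw [Psi_integral_x hσ]
      exact Set.indicator_nonneg (fun y' _ => mul_nonneg (hpos _) (T_nonneg _)) _
  calc ∫ y : E, ∫ x : E, Psi N σ p S m (x, y)
      ≤ ∫ y : E, Set.indicator S (fun y' => A * p y') y := h1
    _ = ∫ y in S, A * p y := integral_indicator hS
    _ = A * ∫ y in S, p y := integral_const_mul A _

lemma mix_int (hσ : 0 < σ) (hint : Integrable p) (x : E) :
    Integrable (fun y : E => p y * gaussKernel N σ (x - y)) := by
  have h1 : AEStronglyMeasurable (fun y : E => gaussKernel N σ (x - y)) volume :=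
    ((gauss_cont (N := N) (σ := σ)).comp (continuous_const.sub continuous_id)).aestronglyMeasurable
  have h2 := hint.bdd_mul h1 (c := (2 * π * σ ^ 2) ^ (-(N : ℝ) / 2)) (Filter.Eventually.of_forall fun y => by
    rw [Real.norm_eq_abs, abs_of_nonneg (gauss_pos hσ _).le]
    exact gauss_le hσ _)
  exact h2.congr (Filter.Eventually.of_forall fun y => mul_comm _ _)

lemma Psi_Hk_int (hσ : 0 < σ) (hpos : ∀ x, 0 ≤ p x) (hint : Integrable p)
    (hS : MeasurableSet S) :
    Integrable (fun x : E => ∫ y : E, Psi N σ p S m (x, y)) :=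
  (Psi_int hσ hpos hint hS).integral_prod_left

lemma Psi_swap (hσ : 0 < σ) (hpos : ∀ x, 0 ≤ p x) (hint : Integrable p)
    (hS : MeasurableSet S) :
    ∫ x : E, ∫ y : E, Psi N σ p S m (x, y) = ∫ y : E, ∫ x : E, Psi N σ p S m (x, y) :=
  integral_integral_swap (Psi_int hσ hpos hint hS)

lemma piece_bound (hσ : 0 < σ) (hpos : ∀ x, 0 ≤ p x) (hint : Integrable p)
    (hS : MeasurableSet S) (x : E) :
    |(∫ y in S, p y * gaussKernel N σ (x - y)) - ∫ y in S, p y * gaussKernel N σ (x - m)|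
      ≤ ∫ y : E, Psi N σ p S m (x, y) := by
  have hi1 : IntegrableOn (fun y : E => p y * gaussKernel N σ (x - y)) S :=
    (mix_int hσ hint x).integrableOn
  have hi2 : IntegrableOn (fun y : E => p y * gaussKernel N σ (x - m)) S :=
    (hint.mul_const _).integrableOn
  rw [← integral_sub hi1 hi2]
  have habs : ∀ y : E, |p y * gaussKernel N σ (x - y) - p y * gaussKernel N σ (x - m)|
      = p y * |gaussKernel N σ (x - y) - gaussKernel N σ (x - m)| := by
    intro y
    rw [← mul_sub, abs_mul, abs_of_nonneg (hpos y)]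
  calc |∫ y in S, (p y * gaussKernel N σ (x - y) - p y * gaussKernel N σ (x - m))|
      ≤ ∫ y in S, |p y * gaussKernel N σ (x - y) - p y * gaussKernel N σ (x - m)| := by
        simpa [Real.norm_eq_abs] using norm_integral_le_integral_norm
          (μ := volume.restrict S)
          (fun y : E => p y * gaussKernel N σ (x - y) - p y * gaussKernel N σ (x - m))
    _ = ∫ y in S, p y * |gaussKernel N σ (x - y) - gaussKernel N σ (x - m)| := by
        simp_rw [habs]
    _ = ∫ y : E, Psi N σ p S m (x, y) := by
        rw [← integral_indicator hS]
        congr 1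

end GKaux

/-- The Gaussian-smoothed density `p ∗ φ_σ` can be approximated arbitrarily well in `L¹`
by a finite mixture of translates of the same Gaussian kernel. -/
theorem smoothed_density_finite_mixture_approx
    (N : ℕ) (hN : 1 ≤ N) (p : EuclideanSpace ℝ (Fin N) → ℝ)
    (hpos : ∀ x, 0 ≤ p x) (hint : Integrable p) (hnorm : ∫ x, p x = 1)
    (σ : ℝ) (hσ : 0 < σ) (ε : ℝ) (hε : 0 < ε) :
    ∃ (K : ℕ) (_ : 1 ≤ K) (w : Fin K → ℝ) (μ : Fin K → EuclideanSpace ℝ (Fin N)),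
      (∀ k, 0 ≤ w k) ∧ (∑ k, w k = 1) ∧
      ∫ x, |(∫ y, p y * gaussKernel N σ (x - y)) - ∑ k, w k * gaussKernel N σ (x - μ k)| < ε := by

  classical
  set c := ∫ x : EuclideanSpace ℝ (Fin N), gaussKernel N σ x with hc
  have hc0 : 0 ≤ c := integral_nonneg fun x => (GKaux.gauss_pos hσ x).le
  have hT := GKaux.T_tendsto (N := N) hσ
  rw [Metric.tendsto_nhds_nhds] at hT
  obtain ⟨δ, hδpos, hδ⟩ := hT (ε/4) (by positivity)
  set η := ε / (8 * (c + 1)) with hη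
  have hηpos : 0 < η := by positivity
  obtain ⟨R, hR⟩ : ∃ R : ℕ,
      ∫ y in (Metric.closedBall (0 : EuclideanSpace ℝ (Fin N)) R)ᶜ, p y < η := by
    have hmono : Monotone (fun n : ℕ =>
        Metric.closedBall (0:EuclideanSpace ℝ (Fin N)) (n:ℝ)) :=
      fun a b hab => Metric.closedBall_subset_closedBall (by exact_mod_cast hab)
    have hun : (⋃ n : ℕ, Metric.closedBall (0:EuclideanSpace ℝ (Fin N)) (n:ℝ)) = Set.univ :=
      Metric.iUnion_closedBall_nat 0
    have h1 := tendsto_setIntegral_of_monotone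
      (fun n : ℕ => measurableSet_closedBall) hmono (by rw [hun]; exact hint.integrableOn)
    rw [hun, setIntegral_univ, hnorm] at h1
    obtain ⟨R, hR⟩ := (h1.eventually (eventually_gt_nhds (show 1 - η < 1 by linarith))).exists
    refine ⟨R, ?_⟩
    have hsplit := integral_add_compl
      (measurableSet_closedBall (x := (0:EuclideanSpace ℝ (Fin N))) (ε := (R:ℝ))) hint
    rw [hnorm] at hsplit
    linarith
  obtain ⟨n, μf, P, hPmeas, hPdisj, hPunion, hPnear, hPlast⟩ :=
    exists_partition (N := N) hδpos (R:ℝ)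
  set w : Fin (n+1) → ℝ := fun k => ∫ y in P k, p y with hw
  have hw0 : ∀ k, 0 ≤ w k := fun k => setIntegral_nonneg (hPmeas k) fun y _ => hpos y
  have hwsum : ∑ k, w k = 1 := by
    have h1 := integral_iUnion hPmeas hPdisj (hint.integrableOn (s := ⋃ k, P k))
    rw [hPunion, setIntegral_univ, hnorm, tsum_fintype] at h1
    rw [hw]
    exact h1.symm
  have hwlast : w (Fin.last n) ≤ η := by
    have h1 : w (Fin.last n) ≤
        ∫ y in (Metric.closedBall (0 : EuclideanSpace ℝ (Fin N)) R)ᶜ, p y := by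
      rw [hw]
      exact setIntegral_mono_set hint.integrableOn
        (Filter.Eventually.of_forall fun y => hpos y)
        (HasSubset.Subset.eventuallyLE hPlast)
    linarith
  refine ⟨n+1, Nat.le_add_left 1 n, w, μf, hw0, hwsum, ?_⟩
  set Ψ := fun k : Fin (n+1) => GKaux.Psi N σ p (P k) (μf k) with hΨ
  have hkey : ∀ k : Fin (n+1), (∫ y, ∫ x, Ψ k (x,y))
      ≤ (if (k:ℕ) < n then (ε/4) * w k else 2*c*η) := by
    intro k
    by_cases hk : (k:ℕ) < n
    · rw [if_pos hk]
      have hA : ∀ y ∈ P k, GKaux.T N σ (y - μf k) ≤ ε/4 := by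
        intro y hy
        have h1 := hPnear k hk y hy
        have h2 : dist (y - μf k) 0 < δ := by rwa [dist_zero_right]
        have h3 := hδ h2
        rw [dist_zero_right, Real.norm_eq_abs] at h3
        exact ((le_abs_self _).trans_lt h3).le
      have h2 := GKaux.Psi_double_le hσ hpos hint (hPmeas k) hA
      rw [hw]
      exact h2
    · rw [if_neg hk]
      have hA : ∀ y ∈ P k, GKaux.T N σ (y - μf k) ≤ 2*c := fun y _ => GKaux.T_le hσ _
      have h1 := GKaux.Psi_double_le hσ hpos hint (hPmeas k) hA
      have hklast : k = Fin.last n := by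
        have := k.isLt
        rw [Fin.ext_iff, Fin.val_last]
        omega
      calc (∫ y, ∫ x, Ψ k (x,y)) ≤ 2*c * ∫ y in P k, p y := h1
        _ = 2*c * w k := by rw [hw]
        _ ≤ 2*c*η := by
            rw [hklast]
            exact mul_le_mul_of_nonneg_left hwlast (by positivity)
  have hHk_int : ∀ k : Fin (n+1), Integrable (fun x => ∫ y, Ψ k (x, y)) :=
    fun k => GKaux.Psi_Hk_int hσ hpos hint (hPmeas k)
  have hpoint : ∀ x, |(∫ y, p y * gaussKernel N σ (x - y))
      - ∑ k, w k * gaussKernel N σ (x - μf k)| ≤ ∑ k, ∫ y, Ψ k (x, y) := by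
    intro x
    have hsplitf : (∫ y, p y * gaussKernel N σ (x - y))
        = ∑ k, ∫ y in P k, p y * gaussKernel N σ (x - y) := by
      have h1 := integral_iUnion hPmeas hPdisj
        ((GKaux.mix_int hσ hint x).integrableOn (s := ⋃ k, P k))
      rw [hPunion, setIntegral_univ, tsum_fintype] at h1
      exact h1
    have hgk : ∀ k, w k * gaussKernel N σ (x - μf k)
        = ∫ y in P k, p y * gaussKernel N σ (x - μf k) := by
      intro k
      rw [hw]
      exact (integral_mul_const _ _).symm
    rw [hsplitf]
    calc |(∑ k, ∫ y in P k, p y * gaussKernel N σ (x - y))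
          - ∑ k, w k * gaussKernel N σ (x - μf k)|
        = |∑ k, ((∫ y in P k, p y * gaussKernel N σ (x - y))
            - ∫ y in P k, p y * gaussKernel N σ (x - μf k))| := by
          rw [Finset.sum_sub_distrib]
          congr 1
          congr 1
          exact Finset.sum_congr rfl fun k _ => hgk k
      _ ≤ ∑ k, |(∫ y in P k, p y * gaussKernel N σ (x - y))
            - ∫ y in P k, p y * gaussKernel N σ (x - μf k)| :=
          Finset.abs_sum_le_sum_abs _ _
      _ ≤ ∑ k, ∫ y, Ψ k (x, y) :=
          Finset.sum_le_sum fun k _ => GKaux.piece_bound hσ hpos hint (hPmeas k) x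
  have hfinal : (∫ x, |(∫ y, p y * gaussKernel N σ (x - y))
      - ∑ k, w k * gaussKernel N σ (x - μf k)|) ≤ ∑ k, ∫ y, ∫ x, Ψ k (x, y) := by
    calc (∫ x, |(∫ y, p y * gaussKernel N σ (x - y))
          - ∑ k, w k * gaussKernel N σ (x - μf k)|)
        ≤ ∫ x, ∑ k, ∫ y, Ψ k (x, y) :=
          integral_mono_of_nonneg (Filter.Eventually.of_forall fun x => abs_nonneg _)
            (integrable_finset_sum _ fun k _ => hHk_int k)
            (Filter.Eventually.of_forall hpoint)
      _ = ∑ k, ∫ x, ∫ y, Ψ k (x, y) := integral_finset_sum _ fun k _ => hHk_int k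
      _ = ∑ k, ∫ y, ∫ x, Ψ k (x, y) := Finset.sum_congr rfl fun k _ =>
          GKaux.Psi_swap hσ hpos hint (hPmeas k)
  have hsum : (∑ k : Fin (n+1), if (k:ℕ) < n then (ε/4) * w k else 2*c*η)
      ≤ ε/4 + 2*c*η := by
    rw [Fin.sum_univ_castSucc]
    have he : ∀ i : Fin n, (if ((i.castSucc : Fin (n+1)):ℕ) < n then (ε/4) * w i.castSucc
        else 2*c*η) = (ε/4) * w i.castSucc := by
      intro i
      rw [if_pos]
      rw [Fin.coe_castSucc]
      exact i.isLt
    rw [Finset.sum_congr rfl fun i _ => he i]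
    simp only [Fin.val_last, lt_irrefl, if_false]
    have h3 : ∑ i : Fin n, w i.castSucc ≤ 1 := by
      rw [← hwsum, Fin.sum_univ_castSucc (f := w)]
      linarith [hw0 (Fin.last n)]
    have h2 : ∑ i : Fin n, (ε/4) * w i.castSucc ≤ ε/4 := by
      rw [← Finset.mul_sum]
      calc (ε/4) * ∑ i : Fin n, w i.castSucc ≤ (ε/4) * 1 :=
            mul_le_mul_of_nonneg_left h3 (by positivity)
        _ = ε/4 := mul_one _
    linarith
  have h2cη : 2*c*η ≤ ε/4 := by
    rw [hη]
    have h1 : (0:ℝ) < c + 1 := by linarith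
    have h2 : 2*c*(ε / (8*(c+1))) = (2*c*ε) / (8*(c+1)) := by ring
    rw [h2, div_le_div_iff₀ (by positivity) (by positivity : (0:ℝ) < 4)]
    nlinarith
  calc (∫ x, |(∫ y, p y * gaussKernel N σ (x - y))
        - ∑ k, w k * gaussKernel N σ (x - μf k)|)
      ≤ ∑ k, ∫ y, ∫ x, Ψ k (x, y) := hfinal
    _ ≤ ∑ k : Fin (n+1), if (k:ℕ) < n then (ε/4) * w k else 2*c*η :=
        Finset.sum_le_sum fun k _ => hkey k
    _ ≤ ε/4 + 2*c*η := hsum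
    _ ≤ ε/4 + ε/4 := by linarith
    _ < ε := by linarith
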